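/- arXiv:1009.3324 — 3 statements merged into one kernel-verified Lean document; each statement's English description precedes it below -/
import Mathlib

section
/- For every integer l ≥ 2, every partition λ, and every residue 0 ≤ r ≤ l−1: c_r(λ) = ∑_{i=0}^{l−1} |λ_i^*| + c_r(λ^{(l)}), i.e. the number of boxes of λ of content congruent to r mod l equals the total size of the l-quotient of λ plus the number of boxes of the l-core of λ of content congruent to r mod l. -/
/-- A partition `λ = (λ_1 ≥ λ_2 ≥ ⋯)`: a non-increasing sequence of natural numbers with
finitely many nonzero terms.  Here `parts n` denotes `λ_{n+1}`. -/
structure Partition' where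
  parts : ℕ → ℕ
  antitone : ∀ ⦃m n : ℕ⦄, m ≤ n → parts n ≤ parts m
  eventually_zero : ∃ N : ℕ, ∀ n ≥ N, parts n = 0

namespace Partition'

/-- `|λ|`, the number of boxes of the Young diagram of `λ`. -/
noncomputable def size (lam : Partition') : ℕ := ∑ᶠ n, lam.parts n

/-- The Young diagram of `λ`: boxes `(m, n)` (column `m`, row `n`) with `m < λ_{n+1}`. -/
def cells (lam : Partition') : Set (ℕ × ℕ) := {c | c.1 < lam.parts c.2}

/-- Maya diagram of `λ`: `maya lam k` holds (bead value 1) iff `k ∉ {λ_m − m : m ≥ 1}`. -/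
def maya (lam : Partition') (k : ℤ) : Prop :=
  ¬ ∃ m : ℕ, k = (lam.parts m : ℤ) - ((m : ℤ) + 1)

/-- The conjugate partition's `(m+1)`-st part: `λ'_{m+1} = #{rows of length > m}`. -/
noncomputable def conjParts (lam : Partition') (m : ℕ) : ℕ :=
  {j : ℕ | m < lam.parts j}.ncard

/-- Hook length of the box `(m, n)`: `(λ_{n+1} − 1 − m) + (λ'_{m+1} − 1 − n) + 1`. -/
noncomputable def hookLength (lam : Partition') (m n : ℕ) : ℕ :=
  (lam.parts n - 1 - m) + (lam.conjParts m - 1 - n) + 1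

end Partition'

/-- `c` is the charge of the 0/1-sequence `μ`:
`#{k < c : μ k = 1} = #{k ≥ c : μ k = 0}` (both sets finite). -/
def IsCharge (μ : ℤ → Prop) (c : ℤ) : Prop :=
  {k : ℤ | k < c ∧ μ k}.Finite ∧ {k : ℤ | c ≤ k ∧ ¬ μ k}.Finite ∧
    {k : ℤ | k < c ∧ μ k}.ncard = {k : ℤ | c ≤ k ∧ ¬ μ k}.ncard

/-- The `i`-th quotient sequence of the Maya diagram of `λ`: `μ_i(k) = μ_λ(l·k + i)`. -/
def quotSeq (l : ℕ) (lam : Partition') (i : ℕ) : ℤ → Prop :=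
  fun k => lam.maya ((l : ℤ) * k + (i : ℕ))

/-- `Q` is the `l`-quotient of `λ` with quotient charges `p`: for each `i`, `p i` is the
charge of the `i`-th quotient sequence `μ_i` and `μ_{Q i}(k) = μ_i(k + p i)`. -/
def IsQuotientWith (l : ℕ) (lam : Partition') (p : Fin l → ℤ) (Q : Fin l → Partition') : Prop :=
  ∀ i : Fin l, IsCharge (quotSeq l lam i) (p i) ∧
    ∀ k : ℤ, (Q i).maya k ↔ quotSeq l lam i (k + p i)

/-- Two boxes are adjacent if they share an edge. -/
def Adj (a b : ℕ × ℕ) : Prop :=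
  (a.1 = b.1 ∧ (a.2 = b.2 + 1 ∨ b.2 = a.2 + 1)) ∨
    (a.2 = b.2 ∧ (a.1 = b.1 + 1 ∨ b.1 = a.1 + 1))

/-- A set of boxes is connected: any two of its boxes are joined by a path of
edge-adjacent boxes inside the set. -/
def ConnectedIn (H : Set (ℕ × ℕ)) : Prop :=
  ∀ x ∈ H, ∀ y ∈ H,
    Relation.ReflTransGen (fun a b => a ∈ H ∧ b ∈ H ∧ Adj a b) x y

/-- `H` contains a 2×2 square of boxes. -/
def HasSquare (H : Set (ℕ × ℕ)) : Prop :=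
  ∃ m n : ℕ, (m, n) ∈ H ∧ (m + 1, n) ∈ H ∧ (m, n + 1) ∈ H ∧ (m + 1, n + 1) ∈ H

/-- `H` is a rim hook of length `l` of `λ`: a connected set of `l` boxes of `λ`,
containing no 2×2 square, whose removal leaves the Young diagram of a partition. -/
def IsRimHook (l : ℕ) (lam : Partition') (H : Set (ℕ × ℕ)) : Prop :=
  H ⊆ lam.cells ∧ H.Finite ∧ H.ncard = l ∧ ConnectedIn H ∧ ¬ HasSquare H ∧
    ∃ mu : Partition', mu.cells = lam.cells \ H

/-- `μ` is obtained from `λ` by removing one rim hook of length `l`. -/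
def RemoveHook (l : ℕ) (lam mu : Partition') : Prop :=
  ∃ H : Set (ℕ × ℕ), IsRimHook l lam H ∧ mu.cells = lam.cells \ H

/-- `λ` is an `l`-core: it admits no rim hook of length `l`. -/
def IsLCore (l : ℕ) (lam : Partition') : Prop := ¬ ∃ H : Set (ℕ × ℕ), IsRimHook l lam H

/-- `c` is the `l`-core of `λ`: obtained from `λ` by repeatedly removing rim hooks of
length `l` until none remain. -/
def IsCoreOf (l : ℕ) (lam c : Partition') : Prop :=
  Relation.ReflTransGen (RemoveHook l) lam c ∧ IsLCore l c

/-- Number of boxes `(m,n)` of `λ` with content `m − n ≡ r (mod l)`. -/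
noncomputable def contentCount (l : ℕ) (lam : Partition') (r : ℤ) : ℕ :=
  {c : ℕ × ℕ | c ∈ lam.cells ∧ ((c.1 : ℤ) - (c.2 : ℤ)) ≡ r [ZMOD (l : ℤ)]}.ncard

/-- `N_d(λ)`: the number of boxes `(m,n)` of `λ` with content `m − n = d`. -/
noncomputable def diagCount (lam : Partition') (d : ℤ) : ℕ :=
  {c : ℕ × ℕ | c ∈ lam.cells ∧ ((c.1 : ℤ) - (c.2 : ℤ)) = d}.ncard

/-- `K` is the blended partition of the charges `p` and the `l`-tuple of partitions `R`:
`{p + K_m − m : m ≥ 1} = {l·(R_{i,m} − m + p_i) + i : 0 ≤ i ≤ l−1, m ≥ 1}` in `ℤ`. -/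
def IsBlended (l : ℕ) (p : Fin l → ℤ) (R : Fin l → Partition') (K : Partition') : Prop :=
  {k : ℤ | ∃ m : ℕ, k = (∑ i, p i) + (K.parts m : ℤ) - ((m : ℤ) + 1)} =
    {k : ℤ | ∃ i : Fin l, ∃ m : ℕ,
      k = (l : ℤ) * (((R i).parts m : ℤ) - ((m : ℤ) + 1) + p i) + (i : ℕ)}

/-!
Removing a rim hook of length `l` from a partition is the same as moving one bead of its Maya
diagram from a position `a + l` down to the vacant position `a`; the hook then consists of the
boxes of contents `a + 1, …, a + l`, one in each residue class mod `l`. Read on the `l`-abacus,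
the move shifts a single bead of one runner down by one step, which removes exactly one
inversion of that runner, and the number of inversions of a runner is the size of the
corresponding quotient partition. An `l`-core admits no such move, so all of its runners are
free of inversions. Along the chain of hook removals from `λ` to its core, `c_r` and the total
size of the quotient therefore drop by one at each step, and the latter ends at zero.
-/

namespace Partition'

variable (lam : Partition')

/-- The beta-number `λ_{m+1} − (m+1)`: the positions where the Maya diagram vanishes. -/
def beta (m : ℕ) : ℤ := (lam.parts m : ℤ) - ((m : ℤ) + 1)

lemma beta_strictAnti : StrictAnti lam.beta := by
  refine strictAnti_nat_of_succ_lt fun m => ?_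
  have : lam.parts (m + 1) ≤ lam.parts m := lam.antitone m.le_succ
  simp only [beta]
  omega

lemma maya_iff {k : ℤ} : lam.maya k ↔ k ∉ Set.range lam.beta := by
  simp only [maya, Set.mem_range, beta, eq_comm]

lemma not_maya_beta (m : ℕ) : ¬ lam.maya (lam.beta m) := by
  simp [maya_iff]

lemma exists_beta_eq_neg : ∃ N, ∀ m ≥ N, lam.beta m = -(m + 1) := by
  obtain ⟨N, hN⟩ := lam.eventually_zero
  exact ⟨N, fun m hm => by simp [beta, hN m hm]⟩

lemma exists_beta_lt (a : ℤ) : ∃ m, lam.beta m < a := by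
  refine ⟨(lam.parts 0 - a).toNat, ?_⟩
  have := lam.antitone (Nat.zero_le (lam.parts 0 - a).toNat)
  simp only [beta]
  omega

lemma mk_mem_cells_iff {m j : ℕ} : (m, j) ∈ lam.cells ↔ (m : ℤ) - j ≤ lam.beta j := by
  simp only [cells, Set.mem_ofPred_eq, beta]
  omega

lemma cells_finite : lam.cells.Finite := by
  obtain ⟨N, hN⟩ := lam.eventually_zero
  refine ((Set.finite_Iio (lam.parts 0)).prod (Set.finite_Iio N)).subset ?_
  rintro ⟨m, j⟩ (hm : m < lam.parts j)
  refine ⟨hm.trans_le (lam.antitone j.zero_le), ?_⟩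
  by_contra! hj
  simp [hN j (by simpa using hj)] at hm

lemma ncard_cells : lam.cells.ncard = lam.size := by
  obtain ⟨N, hN⟩ := lam.eventually_zero
  have hsupp : Function.support lam.parts ⊆ Finset.range N := fun j hj => by
    by_contra! h
    exact hj (hN j (by simpa using h))
  have hinj : Function.Injective fun x : (_ : ℕ) × ℕ => (x.2, x.1) := fun x y h => by
    simp only [Prod.mk.injEq] at h; exact Sigma.ext h.2 (heq_of_eq h.1)
  have hcells : lam.cells =
      ((Finset.range N).sigma (fun j => Finset.range (lam.parts j))).image fun x => (x.2, x.1) := by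
    ext ⟨m, j⟩
    simp only [cells, Set.mem_ofPred_eq, Finset.coe_image, Set.mem_image,
      Finset.mem_coe, Finset.mem_sigma, Finset.mem_range, Sigma.exists, Prod.mk.injEq]
    refine ⟨fun h => ⟨j, m, ⟨?_, h⟩, rfl, rfl⟩, fun ⟨_, _, ⟨_, h⟩, hm, hj⟩ => hm ▸ hj ▸ h⟩
    by_contra! hj
    simp [hN j hj] at h
  rw [hcells, Set.ncard_coe_finset, Finset.card_image_of_injective _ hinj, Finset.card_sigma,
    size, finsum_eq_sum_of_support_subset _ hsupp]
  simp

lemma beta_le_of_cells_subset {lam mu : Partition'} (h : mu.cells ⊆ lam.cells)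
    (j : ℕ) : mu.beta j ≤ lam.beta j := by
  have : mu.parts j ≤ lam.parts j := by
    by_contra! hj
    exact lt_irrefl (lam.parts j) (h (show (lam.parts j, j) ∈ mu.cells from hj))
  simp only [beta]
  omega

lemma antitone_add_of_strictAnti {β : ℕ → ℤ} (hβ : StrictAnti β) : Antitone fun m => β m + m :=
  antitone_nat_of_succ_le fun m => by
    have := hβ (Nat.lt_add_one m)
    push_cast
    omega

def ofBeta (β : ℕ → ℤ) (hβ : StrictAnti β) (hfin : ∃ N, ∀ m ≥ N, β m = -(m + 1)) :
    Partition' where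
  parts m := (β m + m + 1).toNat
  antitone m m' hm := by
    have := antitone_add_of_strictAnti hβ hm
    simp only at this ⊢
    omega
  eventually_zero := by
    obtain ⟨N, hN⟩ := hfin
    exact ⟨N, fun m hm => by simp [hN m hm]⟩

lemma beta_ofBeta {β : ℕ → ℤ} (hβ : StrictAnti β) (hfin : ∃ N, ∀ m ≥ N, β m = -(m + 1)) :
    (ofBeta β hβ hfin).beta = β := by
  obtain ⟨N, hN⟩ := hfin
  funext m
  have h1 := antitone_add_of_strictAnti hβ (le_max_left m N)
  have h2 := hN _ (le_max_right m N)
  simp only [beta, ofBeta] at h1 ⊢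
  omega

lemma exists_beta_succ_lt_lt (lam : Partition') {a : ℤ} {n : ℕ} (hn : a < lam.beta n)
    (ha : a ∉ Set.range lam.beta) : ∃ n' ≥ n, lam.beta (n' + 1) < a ∧ a < lam.beta n' := by
  classical
  have hK := Nat.find_spec (lam.exists_beta_lt a)
  have hlt {j : ℕ} (hj : j < Nat.find (lam.exists_beta_lt a)) : a < lam.beta j :=
    (not_lt.1 (Nat.find_min (lam.exists_beta_lt a) hj) : a ≤ lam.beta j).lt_of_ne
      fun e => ha ⟨j, e.symm⟩
  have hnK : n < Nat.find (lam.exists_beta_lt a) := by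
    by_contra! hKn
    have := lam.beta_strictAnti.antitone hKn
    omega
  refine ⟨Nat.find (lam.exists_beta_lt a) - 1, by omega, ?_, hlt (by omega)⟩
  rwa [Nat.sub_add_cancel (by omega)]

lemma exists_maya_lt_beta_zero (lam : Partition') (h : lam.parts 0 ≠ 0) :
    ∃ k < lam.beta 0, lam.maya k := by
  classical
  have hex : ∃ m, lam.parts m = 0 := by
    obtain ⟨N, hN⟩ := lam.eventually_zero
    exact ⟨N, hN N le_rfl⟩
  have hM : 0 < Nat.find hex := Nat.pos_of_ne_zero fun h0 => h (h0 ▸ Nat.find_spec hex :)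
  refine ⟨-(Nat.find hex : ℤ), by simp only [beta]; omega, ?_⟩
  rw [maya_iff]
  rintro ⟨j, hj⟩
  simp only [beta] at hj
  rcases lt_or_ge j (Nat.find hex) with hjM | hjM
  · have := Nat.find_min hex hjM
    omega
  · have := lam.antitone hjM
    have := Nat.find_spec hex
    omega

end Partition'

def content (x : ℕ × ℕ) : ℤ := (x.1 : ℤ) - x.2

lemma Partition'.mk_mem_cells_sdiff_iff {lam mu : Partition'} {m j : ℕ} :
    (m, j) ∈ lam.cells \ mu.cells ↔ mu.beta j < content (m, j) ∧ content (m, j) ≤ lam.beta j := by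
  rw [Set.mem_sdiff, lam.mk_mem_cells_iff, mu.mk_mem_cells_iff, not_le, and_comm]
  rfl

lemma Adj.symm {a b : ℕ × ℕ} (h : Adj a b) : Adj b a := by
  unfold Adj at *
  omega

lemma ncard_setOf_mem_Ioc_add_modEq (a r : ℤ) {l : ℕ} (hl : 0 < l) :
    {d | d ∈ Set.Ioc a (a + l) ∧ d ≡ r [ZMOD l]}.ncard = 1 := by
  have hset : {d | d ∈ Set.Ioc a (a + l) ∧ d ≡ r [ZMOD l]} =
      ↑((Finset.Ioc a (a + l)).filter (· ≡ r [ZMOD l])) := by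
    ext d
    simp
  have hfloor : (((a + l : ℤ) : ℚ) - r) / ((l : ℤ) : ℚ) = ((a : ℚ) - r) / ((l : ℤ) : ℚ) + 1 := by
    have : ((l : ℤ) : ℚ) ≠ 0 := by positivity
    field_simp
    push_cast
    ring
  have := Int.Ioc_filter_modEq_card a (a + l) (r := l) (by exact_mod_cast hl) r
  rw [hfloor, Int.floor_add_one] at this
  rw [hset, Set.ncard_coe_finset]
  omega

lemma snd_le_of_reflTransGen {H : Set (ℕ × ℕ)} {j : ℕ}
    (hcut : ∀ m, (m, j) ∈ H → (m, j + 1) ∉ H) {x y : ℕ × ℕ}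
    (hxy : Relation.ReflTransGen (fun a b => a ∈ H ∧ b ∈ H ∧ Adj a b) x y) (hx : x.2 ≤ j) :
    y.2 ≤ j := by
  induction hxy with
  | refl => exact hx
  | @tail b c _ hbc ih =>
    obtain ⟨hb, hc, hadj⟩ := hbc
    by_contra! hcj
    obtain ⟨m, k⟩ := b
    obtain ⟨m', k'⟩ := c
    obtain ⟨rfl, rfl⟩ : m' = m ∧ k' = j + 1 := by
      unfold Adj at hadj
      simp only at hadj ih hcj
      omega
    obtain rfl : k = j := by
      unfold Adj at hadj
      simp only at hadj ih
      omega
    exact hcut _ hb hc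

/-- `mu` arises from `lam` by deleting a border strip occupying the rows `n, …, n'`: each row
`j ∈ [n, n')` of `mu` ends where row `j + 1` of `lam` ends. -/
structure HookRemoval (lam mu : Partition') (n n' : ℕ) : Prop where
  le : n ≤ n'
  beta_last_lt : mu.beta n' < lam.beta n'
  beta_eq_succ : ∀ j, n ≤ j → j < n' → mu.beta j = lam.beta (j + 1)
  beta_eq : ∀ j, j < n ∨ n' < j → mu.beta j = lam.beta j

namespace HookRemoval

variable {lam mu : Partition'} {n n' : ℕ} (h : HookRemoval lam mu n n')
include h

lemma beta_lt {j : ℕ} (hn : n ≤ j) (hn' : j ≤ n') : mu.beta j < lam.beta j := by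
  rcases hn'.lt_or_eq with hj | rfl
  · rw [h.beta_eq_succ j hn hj]
    exact lam.beta_strictAnti j.lt_succ_self
  · exact h.beta_last_lt

lemma beta_le (j : ℕ) : mu.beta j ≤ lam.beta j := by
  by_cases hj : n ≤ j ∧ j ≤ n'
  · exact (h.beta_lt hj.1 hj.2).le
  · exact (h.beta_eq j (by omega)).le

lemma cells_subset : mu.cells ⊆ lam.cells := fun ⟨m, j⟩ hx => by
  rw [Partition'.mk_mem_cells_iff] at hx ⊢
  exact hx.trans (h.beta_le j)

lemma beta_last_lt_beta_first : mu.beta n' < lam.beta n :=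
  (h.beta_last_lt).trans_le (lam.beta_strictAnti.antitone h.le)

lemma rows_of_mem {x : ℕ × ℕ} (hx : x ∈ lam.cells \ mu.cells) : n ≤ x.2 ∧ x.2 ≤ n' := by
  obtain ⟨m, j⟩ := x
  rw [Partition'.mk_mem_cells_sdiff_iff] at hx
  by_contra hj
  have := h.beta_eq j (by omega)
  omega

lemma content_mem_Ioc {x : ℕ × ℕ} (hx : x ∈ lam.cells \ mu.cells) :
    content x ∈ Set.Ioc (mu.beta n') (lam.beta n) := by
  obtain ⟨m, j⟩ := x
  obtain ⟨hn, hn'⟩ : n ≤ j ∧ j ≤ n' := h.rows_of_mem hx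
  rw [Partition'.mk_mem_cells_sdiff_iff] at hx
  have := mu.beta_strictAnti.antitone hn'
  have := lam.beta_strictAnti.antitone hn
  exact ⟨by omega, by omega⟩

lemma content_lt_of_snd_lt {x y : ℕ × ℕ} (hx : x ∈ lam.cells \ mu.cells)
    (hy : y ∈ lam.cells \ mu.cells) (hxy : x.2 < y.2) : content y < content x := by
  obtain ⟨m, j⟩ := x
  obtain ⟨m', j'⟩ := y
  obtain ⟨hn, -⟩ : n ≤ j ∧ j ≤ n' := h.rows_of_mem hx
  obtain ⟨-, hn'⟩ : n ≤ j' ∧ j' ≤ n' := h.rows_of_mem hy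
  rw [Partition'.mk_mem_cells_sdiff_iff] at hx hy
  simp only at hxy
  have hstep : mu.beta (j' - 1) = lam.beta j' := by
    rw [h.beta_eq_succ _ (by omega) (by omega), Nat.sub_add_cancel (by omega)]
  have := mu.beta_strictAnti.antitone (show j ≤ j' - 1 by omega)
  omega

lemma injOn_content : Set.InjOn content (lam.cells \ mu.cells) := by
  rintro ⟨m, j⟩ hx ⟨m', j'⟩ hy hxy
  rcases lt_trichotomy j j' with hj | rfl | hj
  · exact absurd hxy (h.content_lt_of_snd_lt hx hy hj).ne'
  · simp only [content] at hxy
    rw [show m = m' by omega]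
  · exact absurd hxy (h.content_lt_of_snd_lt hy hx hj).ne

/-- The strip continues from a box either to the right or, at the end of its row, upwards. -/
lemma exists_adj_content_add_one {x : ℕ × ℕ} (hx : x ∈ lam.cells \ mu.cells)
    (hlt : content x < lam.beta n) :
    ∃ y ∈ lam.cells \ mu.cells, Adj x y ∧ content y = content x + 1 := by
  obtain ⟨m, j⟩ := x
  obtain ⟨hn, hn'⟩ : n ≤ j ∧ j ≤ n' := h.rows_of_mem hx
  rw [Partition'.mk_mem_cells_sdiff_iff] at hx
  rcases hx.2.lt_or_eq with hrow | hend
  · refine ⟨(m + 1, j), ?_, Or.inr ⟨rfl, Or.inr rfl⟩, ?_⟩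
    · rw [Partition'.mk_mem_cells_sdiff_iff]
      simp only [content] at hx hrow ⊢
      push_cast
      omega
    · simp only [content]
      push_cast
      ring
  · have hj : n < j := by
      by_contra! hj
      have := lam.beta_strictAnti.antitone hj
      omega
    have hstep : mu.beta (j - 1) = lam.beta j := by
      rw [h.beta_eq_succ _ (by omega) (by omega), Nat.sub_add_cancel (by omega)]
    have := lam.beta_strictAnti (show j - 1 < j by omega)
    refine ⟨(m, j - 1), ?_, Or.inl ⟨rfl, Or.inl (by omega)⟩, ?_⟩
    · rw [Partition'.mk_mem_cells_sdiff_iff]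
      simp only [content] at hend ⊢
      omega
    · simp only [content]
      omega

lemma exists_path_of_content_le {x : ℕ × ℕ} (hx : x ∈ lam.cells \ mu.cells) (k : ℕ)
    (hk : content x + k ≤ lam.beta n) :
    ∃ y ∈ lam.cells \ mu.cells, content y = content x + k ∧
      Relation.ReflTransGen (fun a b => a ∈ lam.cells \ mu.cells ∧ b ∈ lam.cells \ mu.cells ∧
        Adj a b) x y := by
  induction k with
  | zero => exact ⟨x, hx, by simp, .refl⟩
  | succ k ih =>
    obtain ⟨y, hy, hcy, hpath⟩ := ih (by omega)
    obtain ⟨z, hz, hyz, hcz⟩ := h.exists_adj_content_add_one hy (by omega)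
    exact ⟨z, hz, by rw [hcz, hcy]; push_cast; ring, hpath.tail ⟨hy, hz, hyz⟩⟩

lemma image_content : content '' (lam.cells \ mu.cells) = Set.Ioc (mu.beta n') (lam.beta n) := by
  refine Set.Subset.antisymm (Set.image_subset_iff.2 fun x hx => h.content_mem_Ioc hx) ?_
  rintro d ⟨hd, hd'⟩
  have hbottom : (mu.parts n', n') ∈ lam.cells \ mu.cells := by
    rw [Partition'.mk_mem_cells_sdiff_iff]
    have := h.beta_last_lt
    simp only [content, Partition'.beta] at this ⊢
    omega
  have hcontent : content (mu.parts n', n') = mu.beta n' + 1 := by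
    simp only [content, Partition'.beta]
    ring
  obtain ⟨y, hy, hcy, -⟩ := h.exists_path_of_content_le hbottom (d - (mu.beta n' + 1)).toNat
    (by omega)
  exact ⟨y, hy, by omega⟩

lemma ncard_cells_sdiff : (lam.cells \ mu.cells).ncard = (lam.beta n - mu.beta n').toNat := by
  rw [← h.injOn_content.ncard_image, h.image_content, ← Finset.coe_Ioc,
    Set.ncard_coe_finset, Int.card_Ioc]

lemma connectedIn : ConnectedIn (lam.cells \ mu.cells) := by
  have reach : ∀ x ∈ lam.cells \ mu.cells, ∀ y ∈ lam.cells \ mu.cells, content x ≤ content y →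
      Relation.ReflTransGen (fun a b => a ∈ lam.cells \ mu.cells ∧ b ∈ lam.cells \ mu.cells ∧
        Adj a b) x y := by
    intro x hx y hy hxy
    have := (h.content_mem_Ioc hy).2
    obtain ⟨z, hz, hcz, hpath⟩ :=
      h.exists_path_of_content_le hx (content y - content x).toNat (by omega)
    rwa [h.injOn_content hz hy (by omega)] at hpath
  intro x hx y hy
  rcases le_total (content x) (content y) with hxy | hyx
  · exact reach x hx y hy hxy
  · refine Relation.ReflTransGen.mono ?_ _ _ (Relation.reflTransGen_swap.mpr (reach y hy x hx hyx))
    rintro a b ⟨hb, ha, hba⟩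
    exact ⟨ha, hb, hba.symm⟩

lemma not_hasSquare : ¬ HasSquare (lam.cells \ mu.cells) := by
  rintro ⟨m, j, hx, -, -, hy⟩
  obtain ⟨hn, -⟩ : n ≤ j ∧ j ≤ n' := h.rows_of_mem hx
  obtain ⟨-, hn'⟩ : n ≤ j + 1 ∧ j + 1 ≤ n' := h.rows_of_mem hy
  rw [Partition'.mk_mem_cells_sdiff_iff] at hx hy
  have := h.beta_eq_succ j hn (by omega)
  simp only [content] at hx hy
  push_cast at hy
  omega

lemma isRimHook : IsRimHook (lam.beta n - mu.beta n').toNat lam (lam.cells \ mu.cells) :=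
  ⟨Set.sdiff_subset, lam.cells_finite.subset Set.sdiff_subset, h.ncard_cells_sdiff,
    h.connectedIn, h.not_hasSquare, mu, (Set.sdiff_sdiff_cancel_left h.cells_subset).symm⟩

lemma beta_last_notMem_range : mu.beta n' ∉ Set.range lam.beta := by
  rintro ⟨m, hm⟩
  have := h.beta_last_lt
  rcases le_or_gt m n' with hm' | hm'
  · have := lam.beta_strictAnti.antitone hm'
    omega
  · have := lam.beta_strictAnti.antitone (show n' + 1 ≤ m by omega)
    have := h.beta_eq (n' + 1) (.inr (by omega))
    have := mu.beta_strictAnti (show n' < n' + 1 by omega)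
    omega

lemma range_beta :
    Set.range mu.beta = insert (mu.beta n') (Set.range lam.beta \ {lam.beta n}) := by
  have hne {i j : ℕ} (hij : i ≠ j) : lam.beta i ≠ lam.beta j :=
    lam.beta_strictAnti.injective.ne hij
  have := h.le
  ext k
  simp only [Set.mem_range, Set.mem_insert_iff, Set.mem_sdiff, Set.mem_singleton_iff]
  constructor
  · rintro ⟨j, rfl⟩
    rcases (show j < n ∨ n' < j ∨ (n ≤ j ∧ j < n') ∨ j = n' by omega)
      with hj | hj | ⟨hj, hj'⟩ | rfl
    · exact .inr ⟨⟨j, (h.beta_eq j (.inl hj)).symm⟩, h.beta_eq j (.inl hj) ▸ hne (by omega)⟩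
    · exact .inr ⟨⟨j, (h.beta_eq j (.inr hj)).symm⟩, h.beta_eq j (.inr hj) ▸ hne (by omega)⟩
    · exact .inr ⟨⟨j + 1, (h.beta_eq_succ j hj hj').symm⟩,
        h.beta_eq_succ j hj hj' ▸ hne (by omega)⟩
    · exact .inl rfl
  · rintro (rfl | ⟨⟨m, rfl⟩, hm⟩)
    · exact ⟨n', rfl⟩
    · have hm : m ≠ n := fun e => hm (e ▸ rfl)
      rcases (show m < n ∨ n' < m ∨ (n < m ∧ m ≤ n') by omega) with hj | hj | ⟨hj, hj'⟩
      · exact ⟨m, h.beta_eq m (.inl hj)⟩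
      · exact ⟨m, h.beta_eq m (.inr hj)⟩
      · exact ⟨m - 1, by rw [h.beta_eq_succ _ (by omega) (by omega), Nat.sub_add_cancel (by omega)]⟩

lemma maya_eq : mu.maya = lam.maya ∘ Equiv.swap (mu.beta n') (lam.beta n) := by
  have hlt := h.beta_last_lt_beta_first
  have hnotMem := h.beta_last_notMem_range
  funext k
  rw [Function.comp_apply, mu.maya_iff, lam.maya_iff, h.range_beta]
  by_cases ha : k = mu.beta n'
  · simp [ha]
  by_cases hb : k = lam.beta n
  · simp [hb, hlt.ne', hnotMem]
  · simp [Equiv.swap_apply_of_ne_of_ne ha hb, ha, hb]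

lemma contentCount_eq {l : ℕ} (hl : 0 < l) (hlen : lam.beta n = mu.beta n' + l) (r : ℤ) :
    contentCount l lam r = contentCount l mu r + 1 := by
  have himage : content '' {x | x ∈ lam.cells \ mu.cells ∧ content x ≡ r [ZMOD l]} =
      {d | d ∈ Set.Ioc (mu.beta n') (mu.beta n' + l) ∧ d ≡ r [ZMOD l]} := by
    rw [← hlen, ← h.image_content]
    ext d
    constructor
    · rintro ⟨x, ⟨hx, hr⟩, rfl⟩
      exact ⟨⟨x, hx, rfl⟩, hr⟩
    · rintro ⟨⟨x, hx, rfl⟩, hr⟩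
      exact ⟨x, ⟨hx, hr⟩, rfl⟩
  have hsub : {x | x ∈ mu.cells ∧ content x ≡ r [ZMOD l]} ⊆
      {x | x ∈ lam.cells ∧ content x ≡ r [ZMOD l]} := fun x hx => ⟨h.cells_subset hx.1, hx.2⟩
  have hsdiff : {x | x ∈ lam.cells ∧ content x ≡ r [ZMOD l]} \
      {x | x ∈ mu.cells ∧ content x ≡ r [ZMOD l]} =
      {x | x ∈ lam.cells \ mu.cells ∧ content x ≡ r [ZMOD l]} := by
    ext x
    simp only [Set.mem_sdiff, Set.mem_ofPred_eq]
    tauto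
  show {x | x ∈ lam.cells ∧ content x ≡ r [ZMOD l]}.ncard =
    {x | x ∈ mu.cells ∧ content x ≡ r [ZMOD l]}.ncard + 1
  rw [← Set.ncard_sdiff_add_ncard_of_subset hsub (lam.cells_finite.subset fun x hx => hx.1),
    hsdiff, ← (h.injOn_content.mono fun x hx => hx.1).ncard_image, himage,
    ncard_setOf_mem_Ioc_add_modEq _ _ hl, add_comm]

end HookRemoval

lemma Partition'.exists_hookRemoval (lam : Partition') {a : ℤ} {l : ℕ} (ha : lam.maya a)
    (hb : ¬ lam.maya (a + l)) :
    ∃ mu n n', HookRemoval lam mu n n' ∧ lam.beta n = a + l ∧ mu.beta n' = a := by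
  rw [Partition'.maya_iff] at ha
  obtain ⟨n, hn⟩ : ∃ n, lam.beta n = a + l := by simpa [Partition'.maya_iff] using hb
  have han : a < lam.beta n := (show a ≤ lam.beta n by omega).lt_of_ne fun e => ha ⟨n, e.symm⟩
  obtain ⟨n', hnn', hn'succ, hn'⟩ := lam.exists_beta_succ_lt_lt han ha
  let β' : ℕ → ℤ := fun j =>
    if j < n then lam.beta j else if j < n' then lam.beta (j + 1) else if j = n' then a
    else lam.beta j
  have hβ' : StrictAnti β' := strictAnti_nat_of_succ_lt fun j => by
    have h1 := lam.beta_strictAnti (Nat.lt_add_one j)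
    have h2 := lam.beta_strictAnti (Nat.lt_add_one (j + 1))
    rcases (show j + 1 < n ∨ j + 1 = n ∨ (n ≤ j ∧ j + 1 < n') ∨ (n ≤ j ∧ j + 1 = n') ∨ j = n' ∨
      n' < j by omega) with hj | rfl | hj | ⟨hj, rfl⟩ | rfl | hj <;>
    · simp only [β']
      split_ifs <;> omega
  have hfin : ∃ N, ∀ j ≥ N, β' j = -(j + 1) := by
    obtain ⟨N, hN⟩ := lam.exists_beta_eq_neg
    refine ⟨max N (n' + 1), fun j hj => ?_⟩
    simp only [β']
    rw [if_neg (by omega), if_neg (by omega), if_neg (by omega)]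
    exact hN j (by omega)
  refine ⟨Partition'.ofBeta β' hβ' hfin, n, n', ⟨hnn', ?_, fun j hj hj' => ?_, fun j hj => ?_⟩,
    hn, ?_⟩ <;>
  · simp only [Partition'.beta_ofBeta, β']
    split_ifs <;> first | rfl | omega

lemma exists_hookRemoval_of_connectedIn {lam mu : Partition'} (hsub : mu.cells ⊆ lam.cells)
    (hne : (lam.cells \ mu.cells).Nonempty) (hconn : ConnectedIn (lam.cells \ mu.cells))
    (hsq : ¬ HasSquare (lam.cells \ mu.cells)) : ∃ n n', HookRemoval lam mu n n' := by
  have hle := Partition'.beta_le_of_cells_subset hsub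
  set S := {j | mu.beta j < lam.beta j}
  have hSne : S.Nonempty := by
    obtain ⟨⟨m, j⟩, hx⟩ := hne
    rw [Partition'.mk_mem_cells_sdiff_iff] at hx
    exact ⟨j, show mu.beta j < lam.beta j by omega⟩
  have hSbdd : BddAbove S := by
    obtain ⟨N, hN⟩ := lam.exists_beta_eq_neg
    refine ⟨N, fun j (hj : mu.beta j < lam.beta j) => ?_⟩
    by_contra! hjN
    have : -((j : ℤ) + 1) ≤ mu.beta j := by
      simp only [Partition'.beta]
      omega
    rw [hN j hjN.le] at hj
    omega
  have hbottom {j : ℕ} (hj : j ∈ S) : (mu.parts j, j) ∈ lam.cells \ mu.cells := by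
    rw [Partition'.mk_mem_cells_sdiff_iff]
    simp only [S, Set.mem_ofPred_eq, Partition'.beta] at hj
    simp only [content, Partition'.beta]
    omega
  have hn := Nat.sInf_mem hSne
  have hn' := Nat.sSup_mem hSne hSbdd
  refine ⟨sInf S, sSup S, ⟨Nat.sInf_le hn', hn', fun j hj hj' => ?_, fun j hj => ?_⟩⟩
  · have hmu := mu.beta_strictAnti (Nat.lt_add_one j)
    have hlam := lam.beta_strictAnti (Nat.lt_add_one j)
    -- Rows `j` and `j + 1` of the strip share exactly one column: with none in common no path
    -- could lead from the first row of the strip to the last, with two they would contain a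
    -- `2 × 2` square.
    refine le_antisymm (not_lt.1 fun hcut => ?_) (not_lt.1 fun hwide => hsq ?_)
    · have := snd_le_of_reflTransGen (j := j) (fun m hm hm' => by
          rw [Partition'.mk_mem_cells_sdiff_iff] at hm hm'
          simp only [content] at hm hm'
          push_cast at hm'
          omega) (hconn _ (hbottom hn) _ (hbottom hn')) hj
      exact absurd this (not_le.2 hj')
    · have hpart : (mu.parts j : ℤ) = mu.beta j + j + 1 := by
        simp only [Partition'.beta]
        ring
      refine ⟨mu.parts j, j, ?_, ?_, ?_, ?_⟩ <;>
      · rw [Partition'.mk_mem_cells_sdiff_iff]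
        simp only [content]
        push_cast
        omega
  · have : j ∉ S := by
      rcases hj with hj | hj
      · exact Nat.notMem_of_lt_sInf hj
      · exact notMem_of_csSup_lt hj hSbdd
    exact le_antisymm (hle j) (not_lt.1 this)

def inversions (μ : ℤ → Prop) : Set (ℤ × ℤ) := {q | q.1 < q.2 ∧ μ q.1 ∧ ¬ μ q.2}

lemma encard_inversions_comp_add_right (μ : ℤ → Prop) (t : ℤ) :
    (inversions (fun k => μ (k + t))).encard = (inversions μ).encard := by
  have hinj : Function.Injective fun q : ℤ × ℤ => (q.1 + t, q.2 + t) := fun q q' h => by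
    simp only [Prod.mk.injEq, add_left_inj] at h
    exact Prod.ext h.1 h.2
  have himage : (fun q : ℤ × ℤ => (q.1 + t, q.2 + t)) '' inversions (fun k => μ (k + t)) =
      inversions μ := by
    ext ⟨u, v⟩
    constructor
    · rintro ⟨⟨x, y⟩, ⟨hxy, hx, hy⟩, h⟩
      simp only [Prod.mk.injEq] at h
      obtain ⟨rfl, rfl⟩ := h
      exact ⟨by simpa using hxy, hx, hy⟩
    · rintro ⟨huv, hu, hv⟩
      exact ⟨(u - t, v - t), ⟨by simpa using huv, by simpa, by simpa⟩, by simp⟩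
  rw [← himage, hinj.encard_image]

lemma swap_lt_swap {a u v : ℤ} (huv : u < v) (hne : ¬ (u = a ∧ v = a + 1)) :
    Equiv.swap a (a + 1) u < Equiv.swap a (a + 1) v := by
  simp only [Equiv.swap_apply_def]
  split_ifs <;> omega

lemma encard_inversions_eq_comp_swap_add_one {μ : ℤ → Prop} {a : ℤ} (ha : μ a)
    (hb : ¬ μ (a + 1)) :
    (inversions μ).encard = (inversions (μ ∘ Equiv.swap a (a + 1))).encard + 1 := by
  set σ := Equiv.swap a (a + 1)
  have himage : Prod.map σ σ '' inversions (μ ∘ σ) = inversions μ \ {(a, a + 1)} := by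
    ext ⟨u, v⟩
    simp only [Set.mem_image, Prod.exists, Prod.map_apply, Prod.mk.injEq, Set.mem_sdiff,
      Set.mem_singleton_iff]
    constructor
    · rintro ⟨x, y, ⟨hxy, hx, hy⟩, rfl, rfl⟩
      refine ⟨⟨swap_lt_swap hxy ?_, hx, hy⟩, ?_⟩
      · rintro ⟨rfl, rfl⟩
        simp [σ, hb] at hx
      · rintro ⟨hx', hy'⟩
        simp only [σ, Equiv.swap_apply_eq_iff, Equiv.swap_apply_left, Equiv.swap_apply_right]
          at hx' hy'
        omega
    · rintro ⟨⟨huv, hu, hv⟩, hne⟩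
      refine ⟨σ u, σ v, ⟨swap_lt_swap huv hne, by simpa [σ], by simpa [σ]⟩, by simp [σ]⟩
  have hmem : (a, a + 1) ∈ inversions μ := ⟨by omega, ha, hb⟩
  rw [← Set.encard_sdiff_singleton_add_one hmem, ← himage,
    (Prod.map_injective.2 ⟨σ.injective, σ.injective⟩).encard_image]

lemma exists_adjacent_of_mem_inversions {μ : ℤ → Prop} {u v : ℤ} (hq : (u, v) ∈ inversions μ) :
    ∃ w, μ w ∧ ¬ μ (w + 1) := by
  obtain ⟨hlt, hu, hv⟩ : u < v ∧ μ u ∧ ¬ μ v := hq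
  have huv := hlt.le
  clear hlt
  induction v, huv using Int.leInduction with
  | base => exact absurd hu hv
  | succ v _ ih =>
    by_cases hμv : μ v
    · exact ⟨v, hμv, hv⟩
    · exact ih hμv

lemma Partition'.encard_inversions_maya (lam : Partition') :
    (inversions lam.maya).encard = lam.size := by
  rw [← lam.ncard_cells]
  induction h : lam.cells.ncard using Nat.strong_induction_on generalizing lam with
  | _ k ih =>
  rcases (inversions lam.maya).eq_empty_or_nonempty with hempty | ⟨⟨u, v⟩, huv⟩
  · have h0 : lam.parts 0 = 0 := by
      by_contra h0
      obtain ⟨k, hk, hmaya⟩ := lam.exists_maya_lt_beta_zero h0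
      exact hempty.subset (show (k, lam.beta 0) ∈ inversions lam.maya from
        ⟨hk, hmaya, lam.not_maya_beta 0⟩)
    have hcells : lam.cells = ∅ := Set.eq_empty_of_forall_notMem fun x (hx : x.1 < _) => by
      have := lam.antitone x.2.zero_le
      omega
    simp [hempty, ← h, hcells]
  · -- An adjacent `10` of the Maya diagram is a removable box, a rim hook of length one.
    obtain ⟨w, hw, hw1⟩ := exists_adjacent_of_mem_inversions huv
    obtain ⟨mu, n, n', hmu, hn, hn'⟩ := lam.exists_hookRemoval (l := 1) hw (by simpa using hw1)
    have hcard : lam.cells.ncard = mu.cells.ncard + 1 := by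
      rw [← Set.ncard_sdiff_add_ncard_of_subset hmu.cells_subset lam.cells_finite,
        hmu.ncard_cells_sdiff, hn, hn']
      simp [add_comm]
    rw [encard_inversions_eq_comp_swap_add_one hw hw1, show w + 1 = lam.beta n by simp [hn],
      ← hn', ← hmu.maya_eq, ih _ (by omega) mu rfl, ← h, hcard]
    push_cast
    rfl

lemma mul_add_fin_emod {l : ℕ} (k : ℤ) (i : Fin l) : ((l : ℤ) * k + i) % l = i := by
  rw [add_comm, Int.add_mul_emod_self_left]
  exact Int.emod_eq_of_lt (by positivity) (by exact_mod_cast i.2)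

lemma exists_eq_mul_add_fin {l : ℕ} (hl : 0 < l) (a : ℤ) :
    ∃ (u : ℤ) (i : Fin l), a = l * u + i := by
  have h1 := Int.emod_nonneg a (show (l : ℤ) ≠ 0 by omega)
  have h2 := Int.emod_lt_of_pos a (show (0 : ℤ) < l by omega)
  refine ⟨a / l, ⟨(a % l).toNat, by omega⟩, ?_⟩
  have := Int.mul_ediv_add_emod a l
  simp only
  omega

/-- The total size of the `l`-quotient, read off the Maya diagram without choosing charges. -/
noncomputable def quotientSize (l : ℕ) (lam : Partition') : ℕ∞ :=
  ∑ i : Fin l, (inversions (quotSeq l lam i)).encard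

lemma sum_size_eq_quotientSize {l : ℕ} {lam : Partition'} {p : Fin l → ℤ}
    {Q : Fin l → Partition'} (hquot : IsQuotientWith l lam p Q) :
    ∑ i, ((Q i).size : ℕ∞) = quotientSize l lam := by
  refine Finset.sum_congr rfl fun i _ => ?_
  have : (Q i).maya = fun k => quotSeq l lam i (k + p i) := funext fun k => propext ((hquot i).2 k)
  rw [← (Q i).encard_inversions_maya, this, encard_inversions_comp_add_right]

/-- Moving a bead by `l` moves a bead by one on a single runner of the `l`-abacus. -/
lemma quotientSize_eq_add_one {l : ℕ} (hl : 0 < l) {lam mu : Partition'} {a : ℤ}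
    (ha : lam.maya a) (hb : ¬ lam.maya (a + l))
    (hmu : mu.maya = lam.maya ∘ Equiv.swap a (a + l)) :
    quotientSize l lam = quotientSize l mu + 1 := by
  obtain ⟨u, i₀, rfl⟩ := exists_eq_mul_add_fin hl a
  have hf : Function.Injective fun k : ℤ => (l : ℤ) * k + i₀ := fun k k' hk => by
    simp only [add_left_inj] at hk
    exact mul_left_cancel₀ (by omega) hk
  have hnext : (l : ℤ) * u + i₀ + l = l * (u + 1) + i₀ := by ring
  have hself : quotSeq l mu i₀ = quotSeq l lam i₀ ∘ Equiv.swap u (u + 1) := by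
    funext k
    simp only [quotSeq, hmu, Function.comp_apply, hnext]
    rw [← hf.map_swap]
  have hother (i : Fin l) (hi : i ≠ i₀) : quotSeq l mu i = quotSeq l lam i := by
    have hne (v : ℤ) (k : ℤ) : (l : ℤ) * k + i ≠ l * v + i₀ := fun h => by
      have := congrArg (· % (l : ℤ)) h
      simp only [mul_add_fin_emod] at this
      exact hi (Fin.ext (by exact_mod_cast this))
    funext k
    simp only [quotSeq, hmu, Function.comp_apply, hnext]
    rw [Equiv.swap_apply_of_ne_of_ne (hne u k) (hne (u + 1) k)]
  unfold quotientSize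
  rw [← Finset.add_sum_erase _ _ (Finset.mem_univ i₀),
    ← Finset.add_sum_erase _ _ (Finset.mem_univ i₀), hself,
    encard_inversions_eq_comp_swap_add_one (show quotSeq l lam i₀ u from ha)
      (by simpa [quotSeq, hnext] using hb),
    Finset.sum_congr rfl fun i hi =>
      congrArg (fun μ => (inversions μ).encard) (hother i (Finset.ne_of_mem_erase hi)),
    add_right_comm]

lemma quotientSize_eq_zero_of_isLCore {l : ℕ} {c : Partition'} (hc : IsLCore l c) :
    quotientSize l c = 0 := by
  simp only [quotientSize, Finset.sum_eq_zero_iff, Finset.mem_univ, true_implies,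
    Set.encard_eq_zero]
  refine fun i => Set.eq_empty_of_forall_notMem fun ⟨u, v⟩ huv => ?_
  obtain ⟨w, hw, hw1⟩ := exists_adjacent_of_mem_inversions huv
  obtain ⟨mu, n, n', hr, hn, hn'⟩ := c.exists_hookRemoval (l := l) hw
    (by rwa [show (l : ℤ) * w + i + l = l * (w + 1) + i by ring])
  exact hc ⟨_, by simpa [hn, hn'] using hr.isRimHook⟩

namespace RemoveHook

variable {l : ℕ} {lam mu : Partition'}

lemma exists_hookRemoval (hl : 0 < l) (h : RemoveHook l lam mu) :
    ∃ n n', HookRemoval lam mu n n' ∧ lam.beta n = mu.beta n' + l := by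
  obtain ⟨H, ⟨hsub, -, hcard, hconn, hsq, -⟩, hcells⟩ := h
  have hmu : mu.cells ⊆ lam.cells := hcells ▸ Set.sdiff_subset
  obtain rfl : H = lam.cells \ mu.cells := by rw [hcells, Set.sdiff_sdiff_cancel_left hsub]
  obtain ⟨n, n', hr⟩ := exists_hookRemoval_of_connectedIn hmu
    (Set.nonempty_of_ncard_ne_zero (by omega)) hconn hsq
  refine ⟨n, n', hr, ?_⟩
  have := hr.beta_last_lt_beta_first
  rw [hr.ncard_cells_sdiff] at hcard
  omega

lemma contentCount_eq (hl : 0 < l) (h : RemoveHook l lam mu) (r : ℤ) :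
    contentCount l lam r = contentCount l mu r + 1 := by
  obtain ⟨n, n', hr, hlen⟩ := h.exists_hookRemoval hl
  exact hr.contentCount_eq hl hlen r

lemma quotientSize_eq (hl : 0 < l) (h : RemoveHook l lam mu) :
    quotientSize l lam = quotientSize l mu + 1 := by
  obtain ⟨n, n', hr, hlen⟩ := h.exists_hookRemoval hl
  refine quotientSize_eq_add_one hl (lam.maya_iff.2 hr.beta_last_notMem_range) ?_ ?_
  · rw [← hlen]
    exact lam.not_maya_beta n
  · rw [← hlen]
    exact hr.maya_eq

end RemoveHook

lemma contentCount_add_quotientSize {l : ℕ} (hl : 0 < l) {lam c : Partition'}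
    (h : Relation.ReflTransGen (RemoveHook l) lam c) (r : ℤ) :
    (contentCount l lam r : ℕ∞) + quotientSize l c = quotientSize l lam + contentCount l c r := by
  induction h using Relation.ReflTransGen.head_induction_on with
  | refl => exact add_comm _ _
  | head hstep _ ih =>
    rw [hstep.contentCount_eq hl, hstep.quotientSize_eq hl, Nat.cast_add, Nat.cast_one,
      add_right_comm, ih, add_right_comm]

theorem contentCount_eq_quotient_size_add_core_general (l : ℕ) (hl : 2 ≤ l) (r : ℕ)
    (lam c : Partition') (p : Fin l → ℤ) (Q : Fin l → Partition')
    (hcore : IsCoreOf l lam c) (hquot : IsQuotientWith l lam p Q) :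
    contentCount l lam (r : ℤ) = (∑ i, (Q i).size) + contentCount l c (r : ℤ) := by
  have hchain := contentCount_add_quotientSize (by omega) hcore.1 r
  rw [quotientSize_eq_zero_of_isLCore hcore.2, add_zero, ← sum_size_eq_quotientSize hquot]
    at hchain
  exact_mod_cast hchain

/-- For every `l ≥ 2`, every partition `λ` (with `l`-core `c` and
`l`-quotient `Q`), and every residue `0 ≤ r ≤ l−1`:
`c_r(λ) = ∑_{i=0}^{l−1} |λ_i^*| + c_r(λ^{(l)})`. -/
theorem contentCount_eq_quotient_size_add_core (l : ℕ) (hl : 2 ≤ l) (r : ℕ) (hr : r < l)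
    (lam c : Partition') (p : Fin l → ℤ) (Q : Fin l → Partition')
    (hcore : IsCoreOf l lam c) (hquot : IsQuotientWith l lam p Q) :
    contentCount l lam (r : ℤ) = (∑ i, (Q i).size) + contentCount l c (r : ℤ) :=
  contentCount_eq_quotient_size_add_core_general l hl r lam c p Q hcore hquot
end

section
/- Let l ≥ 2, let λ be a partition with quotient charges p_i = p_i(λ), and let p = nl + m with n ∈ ℤ and 0 ≤ m ≤ l−1. Let μ'(k) = μ_λ(k − p) be the Maya diagram shifted by p, and let tilde p_i be the charge of the sequence μ'_i(k) = μ'(lk + i). Then tilde p_i = p_{i−m} + n for m ≤ i ≤ l−1 and tilde p_i = p_{i−m+l} + n + 1 for 0 ≤ i ≤ m−1; in particular ∑_{i=0}^{l−1} tilde p_i = p. -/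
/-
The charge of `μ` can be read off at any base point `a` as
`a + #{k ≥ a : μ k = 0} - #{k < a : μ k = 1}`, since moving `a` by one changes exactly one of
the two counts by one. Hence charges are unique, and shifting a sequence by `t` shifts its
charge by `-t`. Taking `a = l·A` below every `1` of `μ`, the zeros of `μ` above `a` split by
residue into the zeros of the quotient sequences above `A`, so the quotient charges add up to
the charge of `μ`. Finally `l k + i - p = l (k - n) + (i - m)`, or `l (k - n - 1) + (i - m + l)`
when `i < m`, identifies each shifted quotient sequence with a shifted `μ_{i-m}`, and the Maya
diagram of a partition has charge `0`, so its shift by `p` has charge `p`.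
-/

noncomputable def chargeAt (μ : ℤ → Prop) (a : ℤ) : ℤ :=
  a + {k : ℤ | a ≤ k ∧ ¬ μ k}.ncard - {k : ℤ | k < a ∧ μ k}.ncard

section Charge

variable {μ : ℤ → Prop} {a c : ℤ}

lemma finite_setOf_lt_and_of_finite (h : {k : ℤ | k < a ∧ μ k}.Finite) (b : ℤ) :
    {k : ℤ | k < b ∧ μ k}.Finite :=
  (h.union (Set.finite_Ico a b)).subset fun k ⟨hkb, hk⟩ => by
    by_cases hka : k < a
    · exact Or.inl ⟨hka, hk⟩
    · exact Or.inr ⟨not_lt.mp hka, hkb⟩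

lemma finite_setOf_le_and_not_of_finite (h : {k : ℤ | a ≤ k ∧ ¬ μ k}.Finite) (b : ℤ) :
    {k : ℤ | b ≤ k ∧ ¬ μ k}.Finite :=
  (h.union (Set.finite_Ico b a)).subset fun k ⟨hbk, hk⟩ => by
    by_cases hak : a ≤ k
    · exact Or.inl ⟨hak, hk⟩
    · exact Or.inr ⟨hbk, not_le.mp hak⟩

lemma chargeAt_add_one (h₁ : {k : ℤ | k < a ∧ μ k}.Finite)
    (h₂ : {k : ℤ | a + 1 ≤ k ∧ ¬ μ k}.Finite) : chargeAt μ (a + 1) = chargeAt μ a := by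
  unfold chargeAt
  by_cases ha : μ a
  · have hlt : {k : ℤ | k < a + 1 ∧ μ k} = insert a {k : ℤ | k < a ∧ μ k} := by
      ext k
      simp only [Set.mem_insert_iff, Set.mem_ofPred_eq]
      grind
    have hle : {k : ℤ | a ≤ k ∧ ¬ μ k} = {k : ℤ | a + 1 ≤ k ∧ ¬ μ k} := by
      ext k
      simp only [Set.mem_ofPred_eq]
      grind
    rw [hlt, hle, Set.ncard_insert_of_notMem (fun h => lt_irrefl a h.1) h₁]
    push_cast
    ring
  · have hlt : {k : ℤ | k < a + 1 ∧ μ k} = {k : ℤ | k < a ∧ μ k} := by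
      ext k
      simp only [Set.mem_ofPred_eq]
      grind
    have hle : {k : ℤ | a ≤ k ∧ ¬ μ k} = insert a {k : ℤ | a + 1 ≤ k ∧ ¬ μ k} := by
      ext k
      simp only [Set.mem_insert_iff, Set.mem_ofPred_eq]
      grind
    rw [hlt, hle, Set.ncard_insert_of_notMem (fun h => (lt_add_one a).not_ge h.1) h₂]
    push_cast
    ring

lemma chargeAt_eq_chargeAt (h₁ : {k : ℤ | k < c ∧ μ k}.Finite)
    (h₂ : {k : ℤ | c ≤ k ∧ ¬ μ k}.Finite) (a b : ℤ) : chargeAt μ a = chargeAt μ b := by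
  have step : ∀ x, chargeAt μ (x + 1) = chargeAt μ x := fun x =>
    chargeAt_add_one (finite_setOf_lt_and_of_finite h₁ x)
      (finite_setOf_le_and_not_of_finite h₂ (x + 1))
  have shift : ∀ j : ℤ, chargeAt μ (a + j) = chargeAt μ a := by
    intro j
    induction j using Int.induction_on with
    | zero => rw [add_zero]
    | succ j ih => rw [← add_assoc, step, ih]
    | pred j ih => rw [← ih, ← step (a + (-j - 1))]; ring_nf
  simpa using (shift (b - a)).symm

lemma IsCharge.chargeAt_eq (h : IsCharge μ c) (a : ℤ) : chargeAt μ a = c := by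
  rw [chargeAt_eq_chargeAt h.1 h.2.1 a c, chargeAt, h.2.2]
  ring

lemma IsCharge.of_chargeAt_eq (h₁ : {k : ℤ | k < a ∧ μ k}.Finite)
    (h₂ : {k : ℤ | a ≤ k ∧ ¬ μ k}.Finite) (h : chargeAt μ a = c) : IsCharge μ c := by
  refine ⟨finite_setOf_lt_and_of_finite h₁ c, finite_setOf_le_and_not_of_finite h₂ c, ?_⟩
  rw [← chargeAt_eq_chargeAt h₁ h₂ c a, chargeAt] at h
  omega

lemma IsCharge.unique {c' : ℤ} (h : IsCharge μ c) (h' : IsCharge μ c') : c = c' :=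
  (h.chargeAt_eq 0).symm.trans (h'.chargeAt_eq 0)

lemma IsCharge.comp_add_right (h : IsCharge μ c) (t : ℤ) :
    IsCharge (fun k => μ (k + t)) (c - t) := by
  have hlt : {k : ℤ | k < c - t ∧ μ (k + t)} = (· + t) ⁻¹' {k : ℤ | k < c ∧ μ k} := by
    ext k
    simp [lt_sub_iff_add_lt]
  have hle : {k : ℤ | c - t ≤ k ∧ ¬ μ (k + t)} = (· + t) ⁻¹' {k : ℤ | c ≤ k ∧ ¬ μ k} := by
    ext k
    simp
  refine ⟨hlt ▸ h.1.preimage (add_left_injective t).injOn,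
    hle ▸ h.2.1.preimage (add_left_injective t).injOn, ?_⟩
  have hrange : ∀ s : Set ℤ, s ⊆ Set.range (· + t) := fun _ x _ => ⟨x - t, sub_add_cancel x t⟩
  rw [hlt, hle, Set.ncard_preimage_of_injective_subset_range (add_left_injective t) (hrange _),
    Set.ncard_preimage_of_injective_subset_range (add_left_injective t) (hrange _), h.2.2]

lemma chargeAt_of_forall_lt_not (h : ∀ k < a, ¬ μ k) :
    chargeAt μ a = a + {k : ℤ | a ≤ k ∧ ¬ μ k}.ncard := by
  have hempty : {k : ℤ | k < a ∧ μ k} = ∅ :=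
    Set.eq_empty_of_forall_notMem fun k hk => h k hk.1 hk.2
  rw [chargeAt, hempty, Set.ncard_empty]
  ring

end Charge

lemma Int.mul_le_mul_add_iff {l i A q : ℤ} (hi : 0 ≤ i) (hil : i < l) :
    l * A ≤ l * q + i ↔ A ≤ q :=
  ⟨fun h => by by_contra hq; nlinarith, fun h => by nlinarith⟩

lemma Set.ncard_eq_sum_ncard_mul_add (l : ℕ) [NeZero l] {S : Set ℤ} (hS : S.Finite) :
    S.ncard = ∑ i : Fin l, {q : ℤ | (l : ℤ) * q + i ∈ S}.ncard := by
  let e : Fin l × ℤ ≃ ℤ := (Equiv.prodComm _ _).trans (Int.divModEquiv l).symm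
  have he : ∀ i q, e (i, q) = l * q + i := fun i q => by
    simp [e, mul_comm]
  have : Finite S := hS.to_subtype
  have : ∀ i : Fin l, Finite {q : ℤ // e (i, q) ∈ S} := fun i =>
    Finite.of_injective (fun q => (⟨e (i, q.1), q.2⟩ : S)) fun q q' h =>
      Subtype.ext (Prod.ext_iff.mp (e.injective (congrArg Subtype.val h))).2
  calc S.ncard = Nat.card {x : Fin l × ℤ // e (x.1, x.2) ∈ S} :=
        (Nat.card_congr (e.subtypeEquiv fun _ => Iff.rfl)).symm
    _ = Nat.card (Σ i : Fin l, {q : ℤ // e (i, q) ∈ S}) :=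
        Nat.card_congr (Equiv.subtypeProdEquivSigmaSubtype fun i q => e (i, q) ∈ S)
    _ = ∑ i : Fin l, {q : ℤ | (l : ℤ) * q + i ∈ S}.ncard := by
        rw [Nat.card_sigma]
        simp only [he]
        rfl

lemma IsCharge.sum_quotient {μ : ℤ → Prop} {c : ℤ} (l : ℕ) [NeZero l] (hc : IsCharge μ c)
    {p : Fin l → ℤ} (hp : ∀ i : Fin l, IsCharge (fun k => μ ((l : ℤ) * k + (i : ℕ))) (p i)) :
    ∑ i, p i = c := by
  obtain ⟨b, hb⟩ := hc.1.bddBelow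
  set A : ℤ := min (min b c) 0
  have hlA : (l : ℤ) * A ≤ min b c := by
    have : (1 : ℤ) ≤ l := by exact_mod_cast Nat.one_le_iff_ne_zero.mpr (NeZero.ne l)
    nlinarith [min_le_left (min b c) 0, min_le_right (min b c) 0]
  have hbelow : ∀ k < (l : ℤ) * A, ¬ μ k := fun k hk hμ => by
    have := hb ⟨by omega, hμ⟩
    omega
  have hi : ∀ i : Fin l, (0 : ℤ) ≤ (i : ℕ) ∧ ((i : ℕ) : ℤ) < l := fun i =>
    ⟨by positivity, by exact_mod_cast i.isLt⟩
  have hfiber : ∀ i : Fin l, {q : ℤ | (l : ℤ) * q + (i : ℕ) ∈ {k | (l : ℤ) * A ≤ k ∧ ¬ μ k}} =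
      {q : ℤ | A ≤ q ∧ ¬ μ ((l : ℤ) * q + (i : ℕ))} := fun i => by
    ext q
    simp [Int.mul_le_mul_add_iff (hi i).1 (hi i).2]
  calc ∑ i, p i = ∑ i : Fin l, (A + {q : ℤ | A ≤ q ∧ ¬ μ ((l : ℤ) * q + (i : ℕ))}.ncard) := by
        refine Finset.sum_congr rfl fun i _ => ?_
        rw [← (hp i).chargeAt_eq A, chargeAt_of_forall_lt_not fun q hq => hbelow _ ?_]
        exact lt_of_not_ge (mt (Int.mul_le_mul_add_iff (hi i).1 (hi i).2).mp hq.not_ge)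
    _ = l * A + ∑ i : Fin l, ({q : ℤ | A ≤ q ∧ ¬ μ ((l : ℤ) * q + (i : ℕ))}.ncard : ℤ) := by
        rw [Finset.sum_add_distrib, Finset.sum_const, Finset.card_univ, Fintype.card_fin,
          nsmul_eq_mul]
    _ = l * A + {k : ℤ | (l : ℤ) * A ≤ k ∧ ¬ μ k}.ncard := by
        rw [Set.ncard_eq_sum_ncard_mul_add l (finite_setOf_le_and_not_of_finite hc.2.1 _)]
        simp only [hfiber, Nat.cast_sum]
    _ = c := by rw [← chargeAt_of_forall_lt_not hbelow, hc.chargeAt_eq]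

lemma Partition'.isCharge_maya (lam : Partition') : IsCharge lam.maya 0 := by
  obtain ⟨N, hN⟩ := lam.eventually_zero
  set g : ℕ → ℤ := fun j => (lam.parts j : ℤ) - ((j : ℤ) + 1)
  have hg : StrictAnti g := strictAnti_nat_of_succ_lt fun j => by
    have := lam.antitone (Nat.le_add_right j 1)
    simp only [g]
    omega
  have hgN : ∀ j, N ≤ j → g j = -((j : ℤ) + 1) := fun j hj => by
    simp [g, hN j hj]
  have hbelow : ∀ k < -(N : ℤ), ¬ lam.maya k := fun k hk hμ =>
    hμ ⟨(-k - 1).toNat, by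
      have := hgN (-k - 1).toNat (by omega)
      simp only [g] at this
      omega⟩
  have hzeros : {k : ℤ | -(N : ℤ) ≤ k ∧ ¬ lam.maya k} = g '' Set.Iio N := by
    ext k
    simp only [Partition'.maya, not_not, Set.mem_ofPred_eq, Set.mem_image, Set.mem_Iio]
    constructor
    · rintro ⟨hk, j, rfl⟩
      refine ⟨j, ?_, rfl⟩
      by_contra hj
      have := hgN j (not_lt.mp hj)
      simp only [g] at this hk
      omega
    · rintro ⟨j, hj, rfl⟩
      exact ⟨by simp only [g]; omega, j, rfl⟩
  have hfin : {k : ℤ | -(N : ℤ) ≤ k ∧ ¬ lam.maya k}.Finite :=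
    hzeros ▸ (Set.finite_Iio N).image g
  refine IsCharge.of_chargeAt_eq (Set.Finite.subset Set.finite_empty ?_) hfin ?_
  · exact fun k hk => hbelow k hk.1 hk.2
  · rw [chargeAt_of_forall_lt_not hbelow, hzeros, Set.ncard_image_of_injective _ hg.injective,
      ← Finset.coe_range, Set.ncard_coe_finset, Finset.card_range]
    ring

/-- Let `l ≥ 2`, let `λ` have quotient charges `p_i`, and let
`p = nl + m` with `0 ≤ m ≤ l−1`. Let `p̃_i` be the charge of `k ↦ μ_λ(lk + i − p)` (the
quotient sequences of the Maya diagram shifted by `p`). Then `p̃_i = p_{i−m} + n` for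
`m ≤ i ≤ l−1`, `p̃_i = p_{i−m+l} + n + 1` for `0 ≤ i ≤ m−1`, and `∑ p̃_i = p`. -/
theorem shifted_quotient_charges (l : ℕ) (lam : Partition')
    (p : Fin l → ℤ) (hp : ∀ i : Fin l, IsCharge (quotSeq l lam i) (p i))
    (n : ℤ) (m : ℕ) (hm : m < l) (P : ℤ) (hP : P = n * l + m)
    (tp : Fin l → ℤ)
    (htp : ∀ i : Fin l, IsCharge (fun k => lam.maya ((l : ℤ) * k + (i : ℕ) - P)) (tp i)) :
    (∀ i : Fin l, ∀ _h : m ≤ (i : ℕ),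
      tp i = p ⟨(i : ℕ) - m, lt_of_le_of_lt (Nat.sub_le _ _) i.isLt⟩ + n) ∧
    (∀ i : Fin l, ∀ _h : (i : ℕ) < m,
      tp i = p ⟨(i : ℕ) + l - m, by omega⟩ + n + 1) ∧
    ∑ i, tp i = P := by
  have : NeZero l := ⟨by omega⟩
  have hshift : ∀ (i j : Fin l) (s : ℤ),
      ((i : ℕ) : ℤ) - P = l * s + (j : ℕ) → tp i = p j - s := by
    intro i j s h
    have hseq : (fun k => lam.maya ((l : ℤ) * k + (i : ℕ) - P)) =
        fun k => quotSeq l lam j (k + s) := funext fun k => by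
      rw [quotSeq, show (l : ℤ) * k + (i : ℕ) - P = l * (k + s) + (j : ℕ) by linear_combination h]
    exact (htp i).unique (hseq ▸ (hp j).comp_add_right s)
  refine ⟨fun i hi => ?_, fun i hi => ?_, ?_⟩
  · rw [hshift i ⟨i - m, by omega⟩ (-n) (by push_cast [hi, hP]; ring)]
    ring
  · have hml : m ≤ (i : ℕ) + l := by omega
    rw [hshift i ⟨i + l - m, by omega⟩ (-(n + 1)) (by push_cast [hP, hml]; ring)]
    ring
  · have hμ : IsCharge (fun k => lam.maya (k - P)) P := by
      simpa [sub_eq_add_neg] using lam.isCharge_maya.comp_add_right (-P)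
    exact hμ.sum_quotient l htp
end

section
/- For every integer l ≥ 2 and every fixed integer p, the blending construction defines a bijection from the set of pairs ((p_0, …, p_{l−1}), (R_0, …, R_{l−1})), where the p_i are integers with ∑_i p_i = p and the R_i are partitions, onto the set of all partitions; i.e., every partition K arises as the blended partition of a unique such pair. -/
namespace BlendAux

open Set

lemma partition_ext {K K' : Partition'} (h : K.parts = K'.parts) : K = K' := by
  cases K; cases K'; simpa using h

/-- The beta-set (Maya diagram support) of a partition with charge `c`. -/
def beta (c : ℤ) (K : Partition') : Set ℤ :=
  {k | ∃ m : ℕ, k = c + (K.parts m : ℤ) - ((m : ℤ) + 1)}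

/-- The canonical strictly decreasing enumeration of `beta c K`. -/
def genum (c : ℤ) (K : Partition') (m : ℕ) : ℤ :=
  c + (K.parts m : ℤ) - ((m : ℤ) + 1)

lemma beta_eq_range (c : ℤ) (K : Partition') : beta c K = Set.range (genum c K) := by
  ext k; simp [beta, genum, Set.mem_range, eq_comm]

lemma genum_strictAnti (c : ℤ) (K : Partition') : StrictAnti (genum c K) := by
  apply strictAnti_nat_of_succ_lt
  intro n
  have h : K.parts (n + 1) ≤ K.parts n := K.antitone (Nat.le_add_right n 1)
  unfold genum
  push_cast
  omega

/-- A set of integers bounded above and containing all sufficiently small integers. -/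
def Good (S : Set ℤ) : Prop :=
  (∃ a : ℤ, ∀ k ∈ S, k ≤ a) ∧ (∃ b : ℤ, ∀ k : ℤ, k ≤ b → k ∈ S)

lemma good_beta (c : ℤ) (K : Partition') : Good (beta c K) := by
  obtain ⟨N, hN⟩ := K.eventually_zero
  constructor
  · refine ⟨c + K.parts 0, ?_⟩
    rintro k ⟨m, rfl⟩
    have h := K.antitone (Nat.zero_le m)
    have hm : (0:ℤ) ≤ m := Int.natCast_nonneg m
    push_cast
    omega
  · refine ⟨c - N - 1, fun k hk => ?_⟩
    refine ⟨(c - k - 1).toNat, ?_⟩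
    have hN' : K.parts (c - k - 1).toNat = 0 := by
      apply hN; omega
    rw [hN']
    push_cast
    omega

lemma strictAnti_range_eq {g g' : ℕ → ℤ} (hg : StrictAnti g) (hg' : StrictAnti g')
    (h : Set.range g = Set.range g') : g = g' := by
  funext n
  induction n using Nat.strong_induction_on with
  | _ n ih =>
    obtain ⟨j, hj⟩ : g n ∈ Set.range g' := h ▸ Set.mem_range_self n
    obtain ⟨j', hj'⟩ : g' n ∈ Set.range g := h.symm ▸ Set.mem_range_self n
    have hle : g n ≤ g' n := by
      rcases lt_or_ge j n with hc | hc
      · exfalso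
        have hji := ih j hc
        rw [← hji] at hj
        exact absurd (hg.injective hj) (Nat.ne_of_lt hc)
      · rw [← hj]; exact hg'.antitone hc
    have hge : g' n ≤ g n := by
      rcases lt_or_ge j' n with hc | hc
      · exfalso
        have hji := ih j' hc
        rw [hji] at hj'
        exact absurd (hg'.injective hj') (Nat.ne_of_lt hc)
      · rw [← hj']; exact hg.antitone hc
    omega

lemma beta_inj {c c' : ℤ} {K K' : Partition'} (h : beta c K = beta c' K') :
    c = c' ∧ K = K' := by
  rw [beta_eq_range, beta_eq_range] at h
  have hg := strictAnti_range_eq (genum_strictAnti c K) (genum_strictAnti c' K') h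
  obtain ⟨N, hN⟩ := K.eventually_zero
  obtain ⟨N', hN'⟩ := K'.eventually_zero
  have hc : c = c' := by
    have hmn := congrFun hg (max N N')
    unfold genum at hmn
    rw [hN _ (le_max_left _ _), hN' _ (le_max_right _ _)] at hmn
    omega
  refine ⟨hc, partition_ext (funext fun m => ?_)⟩
  have hm := congrFun hg m
  unfold genum at hm
  omega

lemma exists_beta {S : Set ℤ} (hS : Good S) : ∃ c : ℤ, ∃ K : Partition', beta c K = S := by
  classical
  obtain ⟨⟨a, ha⟩, ⟨b, hb⟩⟩ := hS
  have hnext : ∀ x : ℤ, ∃ y : ℤ, (y ∈ S ∧ y < x) ∧ ∀ z : ℤ, (z ∈ S ∧ z < x) → z ≤ y := by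
    intro x
    exact Int.exists_greatest_of_bdd ⟨x, fun z hz => hz.2.le⟩
      ⟨min b (x - 1), hb _ (min_le_left _ _), by omega⟩
  choose nxt h1 h2 using hnext
  obtain ⟨t, ht, htmax⟩ : ∃ t, t ∈ S ∧ ∀ z : ℤ, z ∈ S → z ≤ t := by
    obtain ⟨t, h1x, h2x⟩ := Int.exists_greatest_of_bdd ⟨a, ha⟩ ⟨b, hb b le_rfl⟩
    exact ⟨t, h1x, h2x⟩
  set f : ℕ → ℤ := fun m => Nat.rec t (fun _ p => nxt p) m with hfdef
  have hf0 : f 0 = t := rfl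
  have hfs : ∀ m, f (m + 1) = nxt (f m) := fun m => rfl
  have hfS : ∀ m, f m ∈ S := by
    intro m
    cases m with
    | zero => exact ht
    | succ n => rw [hfs]; exact (h1 _).1
  have hflt : ∀ m, f (m + 1) < f m := fun m => (h1 (f m)).2
  have hfmax : ∀ m, ∀ z ∈ S, z < f m → z ≤ f (m + 1) := fun m z hz hlt => h2 _ z ⟨hz, hlt⟩
  have hsa : StrictAnti f := strictAnti_nat_of_succ_lt hflt
  have hfub : ∀ m : ℕ, f m ≤ f 0 - m := by
    intro m
    induction m with
    | zero => simp
    | succ n ih =>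
      have := hflt n
      push_cast
      push_cast at ih
      omega
  have hsurj : ∀ k ∈ S, ∃ m, f m = k := by
    intro k hk
    have hk0 : k ≤ f 0 := by rw [hf0]; exact htmax k hk
    have hex : ∃ m : ℕ, f m ≤ k := by
      refine ⟨(f 0 - k).toNat, ?_⟩
      have h := hfub (f 0 - k).toNat
      omega
    obtain ⟨n, hn, hmin⟩ : ∃ n, f n ≤ k ∧ ∀ m < n, ¬ f m ≤ k :=
      ⟨Nat.find hex, Nat.find_spec hex, fun m hm => Nat.find_min hex hm⟩
    rcases eq_or_lt_of_le hn with heq | hlt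
    · exact ⟨n, heq⟩
    · exfalso
      cases n with
      | zero => omega
      | succ n' =>
        have h3 : ¬ f n' ≤ k := hmin n' (Nat.lt_succ_self n')
        have h4 : k ≤ f (n' + 1) := hfmax n' k hk (by omega)
        omega
  set M : ℕ := (f 0 - b).toNat with hMdef
  have hbt : b ≤ f 0 := by rw [hf0]; exact htmax b (hb b le_rfl)
  have hMb : f M ≤ b := by
    have h := hfub M
    omega
  have hstep : ∀ m, M ≤ m → f (m + 1) = f m - 1 := by
    intro m hm
    have h1x : f m ≤ b := le_trans (hsa.antitone hm) hMb
    have hin : f m - 1 ∈ S := hb _ (by omega)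
    have h3 := hfmax m (f m - 1) hin (by omega)
    have h4 := hflt m
    omega
  have harith : ∀ m, M ≤ m → f m = f M - ((m : ℤ) - M) := by
    intro m hm
    induction m with
    | zero =>
      have hM0 : M = 0 := Nat.le_zero.mp hm
      simp [hM0]
    | succ n ih =>
      rcases Nat.lt_or_ge n M with h | h
      · have hM1 : M = n + 1 := by omega
        simp [hM1]
      · have e := hstep n h
        have e2 := ih h
        push_cast
        push_cast at e2
        omega
  set c : ℤ := f M + M + 1 with hcdef
  have ha2 : Antitone (fun j : ℕ => f j + j) := by
    apply antitone_nat_of_succ_le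
    intro j
    have := hflt j
    push_cast
    omega
  have hnn : ∀ m : ℕ, c ≤ f m + m + 1 := by
    intro m
    rcases Nat.lt_or_ge m M with h | h
    · have := ha2 (le_of_lt h)
      simp only at this
      omega
    · have := harith m h
      omega
  refine ⟨c, ⟨fun m => (f m + m + 1 - c).toNat, ?_, ⟨M, ?_⟩⟩, ?_⟩
  · intro m n hmn
    show (f n + n + 1 - c).toNat ≤ (f m + m + 1 - c).toNat
    have h1x := hnn m
    have h2x := hnn n
    have h3x := ha2 hmn
    simp only at h3x
    omega
  · intro n hn
    show (f n + n + 1 - c).toNat = 0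
    have := harith n hn
    omega
  · ext k
    simp only [beta, Set.mem_setOf_eq]
    constructor
    · rintro ⟨m, hk⟩
      have hk2 : k = c + ((f m + m + 1 - c).toNat : ℤ) - ((m : ℤ) + 1) := hk
      have h := hnn m
      have hk' : k = f m := by omega
      rw [hk']; exact hfS m
    · intro hk
      obtain ⟨m, hm⟩ := hsurj k hk
      refine ⟨m, ?_⟩
      show k = c + ((f m + m + 1 - c).toNat : ℤ) - ((m : ℤ) + 1)
      have := hnn m
      omega

lemma beta_inter_eq (c : ℤ) (K : Partition') (N : ℕ) (hN : ∀ n ≥ N, K.parts n = 0)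
    (t : ℤ) (ht : t ≤ c - N) :
    beta c K ∩ Set.Ici t = genum c K '' Set.Iio (c - t).toNat := by
  ext k
  simp only [beta_eq_range, Set.mem_inter_iff, Set.mem_range, Set.mem_Ici, Set.mem_image,
    Set.mem_Iio]
  constructor
  · rintro ⟨⟨m, rfl⟩, hk⟩
    refine ⟨m, ?_, rfl⟩
    by_contra h
    push_neg at h
    have hmN : N ≤ m := by omega
    have hz := hN m hmN
    unfold genum at hk
    rw [hz] at hk
    push_cast at hk
    omega
  · rintro ⟨m, hm, rfl⟩
    refine ⟨⟨m, rfl⟩, ?_⟩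
    unfold genum
    have h0 : (0 : ℤ) ≤ (K.parts m : ℤ) := Int.natCast_nonneg _
    omega

lemma beta_inter_finite (c : ℤ) (K : Partition') (t : ℤ) :
    (beta c K ∩ Set.Ici t).Finite := by
  obtain ⟨N, hN⟩ := K.eventually_zero
  have hsub : beta c K ∩ Set.Ici t ⊆ beta c K ∩ Set.Ici (min t (c - N)) :=
    Set.inter_subset_inter_right _ (Set.Ici_subset_Ici.mpr (min_le_left _ _))
  refine Set.Finite.subset ?_ hsub
  rw [beta_inter_eq c K N hN (min t (c - N)) (min_le_right _ _)]
  exact (Set.finite_Iio _).image _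

lemma count_beta (c : ℤ) (K : Partition') :
    ∃ t0 : ℤ, ∀ t ≤ t0, ((beta c K) ∩ Set.Ici t).ncard = (c - t).toNat := by
  obtain ⟨N, hN⟩ := K.eventually_zero
  refine ⟨c - N, fun t ht => ?_⟩
  rw [beta_inter_eq c K N hN t ht,
    Set.ncard_image_of_injective _ (genum_strictAnti c K).injective]
  rw [show Set.Iio ((c - t).toNat) = ↑(Finset.Iio ((c - t).toNat)) by ext; simp]
  rw [Set.ncard_coe_finset, Nat.card_Iio]

/-- The `i`-th quotient set of a set of integers. -/
def qset (l : ℕ) (S : Set ℤ) (i : Fin l) : Set ℤ :=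
  {q : ℤ | (l : ℤ) * q + ((i : ℕ) : ℤ) ∈ S}

lemma res_uniq {l : ℕ} (hl : 0 < l) {q q' : ℤ} {i i' : Fin l}
    (h : (l : ℤ) * q + ((i : ℕ) : ℤ) = (l : ℤ) * q' + ((i' : ℕ) : ℤ)) : q = q' ∧ i = i' := by
  have hi : ((i : ℕ) : ℤ) < l := by exact_mod_cast i.isLt
  have hi' : ((i' : ℕ) : ℤ) < l := by exact_mod_cast i'.isLt
  have hi0 : (0 : ℤ) ≤ ((i : ℕ) : ℤ) := Int.natCast_nonneg _
  have hi0' : (0 : ℤ) ≤ ((i' : ℕ) : ℤ) := Int.natCast_nonneg _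
  have hl0 : (0 : ℤ) ≤ (l : ℤ) := Int.natCast_nonneg _
  have hq : q = q' := by
    rcases lt_trichotomy q q' with hlt | heq | hgt
    · exfalso
      have h1 : (l : ℤ) * (q + 1) ≤ (l : ℤ) * q' :=
        mul_le_mul_of_nonneg_left (by omega) hl0
      nlinarith
    · exact heq
    · exfalso
      have h1 : (l : ℤ) * (q' + 1) ≤ (l : ℤ) * q :=
        mul_le_mul_of_nonneg_left (by omega) hl0
      nlinarith
  subst hq
  refine ⟨rfl, Fin.ext ?_⟩
  have hii : ((i : ℕ) : ℤ) = ((i' : ℕ) : ℤ) := by omega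
  exact_mod_cast hii

lemma mem_decomp {l : ℕ} (hl : 0 < l) (S : Set ℤ) (k : ℤ) :
    k ∈ S ↔ ∃ i : Fin l, ∃ q : ℤ, q ∈ qset l S i ∧ k = (l : ℤ) * q + ((i : ℕ) : ℤ) := by
  constructor
  · intro hk
    have hl0 : (l : ℤ) ≠ 0 := by exact_mod_cast hl.ne'
    have hlpos : (0 : ℤ) < l := by exact_mod_cast hl
    have hmod0 : 0 ≤ k % (l : ℤ) := Int.emod_nonneg k hl0
    have hmodl : k % (l : ℤ) < l := Int.emod_lt_of_pos k hlpos
    have hcast : (((k % (l : ℤ)).toNat : ℕ) : ℤ) = k % l := Int.toNat_of_nonneg hmod0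
    refine ⟨⟨(k % (l : ℤ)).toNat, by omega⟩, k / (l : ℤ), ?_, ?_⟩
    · show (l : ℤ) * (k / l) + _ ∈ S
      simp only [hcast]
      rw [Int.mul_ediv_add_emod k l]
      exact hk
    · simp only [hcast]
      rw [Int.mul_ediv_add_emod k l]
  · rintro ⟨i, q, hq, rfl⟩
    exact hq

lemma count_quot {l : ℕ} (hl : 0 < l) (S : Set ℤ) (t : ℤ)
    (hfin : ∀ i : Fin l, (qset l S i ∩ Set.Ici t).Finite) :
    (S ∩ Set.Ici ((l : ℤ) * t)).ncard = ∑ i : Fin l, (qset l S i ∩ Set.Ici t).ncard := by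
  classical
  have hl0 : (0 : ℤ) ≤ (l : ℤ) := Int.natCast_nonneg _
  have hset : S ∩ Set.Ici ((l : ℤ) * t) =
      ↑(Finset.univ.biUnion fun i : Fin l =>
        (hfin i).toFinset.image fun q => (l : ℤ) * q + ((i : ℕ) : ℤ)) := by
    ext k
    simp only [Set.mem_inter_iff, Set.mem_Ici, Finset.mem_coe, Finset.mem_biUnion,
      Finset.mem_image, Set.Finite.mem_toFinset, Finset.mem_univ, true_and,
      Set.mem_setOf_eq]
    constructor
    · rintro ⟨hkS, hkt⟩
      obtain ⟨i, q, hq, rfl⟩ := (mem_decomp hl S k).mp hkS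
      have hi : ((i : ℕ) : ℤ) < l := by exact_mod_cast i.isLt
      have hi0 : (0 : ℤ) ≤ ((i : ℕ) : ℤ) := Int.natCast_nonneg _
      have hqt : t ≤ q := by
        by_contra hcon
        push_neg at hcon
        have h1 : (l : ℤ) * (q + 1) ≤ (l : ℤ) * t :=
          mul_le_mul_of_nonneg_left (by omega) hl0
        nlinarith
      exact ⟨i, q, ⟨hq, hqt⟩, rfl⟩
    · rintro ⟨i, q, ⟨hq, hqt⟩, rfl⟩
      have hi0 : (0 : ℤ) ≤ ((i : ℕ) : ℤ) := Int.natCast_nonneg _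
      refine ⟨(mem_decomp hl S _).mpr ⟨i, q, hq, rfl⟩, ?_⟩
      have h1 : (l : ℤ) * t ≤ (l : ℤ) * q := mul_le_mul_of_nonneg_left hqt hl0
      omega
  rw [hset, Set.ncard_coe_finset]
  rw [Finset.card_biUnion]
  · refine Finset.sum_congr rfl fun i _ => ?_
    have hinj : Function.Injective fun q : ℤ => (l : ℤ) * q + ((i : ℕ) : ℤ) := by
      intro a b hab
      simp only at hab
      have hl0' : (l : ℤ) ≠ 0 := by exact_mod_cast hl.ne'
      have hab' : (l : ℤ) * a = (l : ℤ) * b := by omega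
      exact mul_left_cancel₀ hl0' hab'
    rw [Finset.card_image_of_injective _ hinj]
    exact (Set.ncard_eq_toFinset_card _ (hfin i)).symm
  · intro i _ j _ hij
    simp only [Finset.disjoint_left, Finset.mem_image, Set.Finite.mem_toFinset]
    rintro k ⟨q, hq, rfl⟩ ⟨q', hq', he⟩
    exact hij ((res_uniq hl he).2.symm)

lemma charge_add {l : ℕ} (hl : 0 < l) {S : Set ℤ} {c : ℤ} {K : Partition'}
    {p : Fin l → ℤ} {R : Fin l → Partition'}
    (hS : beta c K = S) (hq : ∀ i, beta (p i) (R i) = qset l S i) : c = ∑ i, p i := by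
  classical
  have hne : Nonempty (Fin l) := ⟨⟨0, hl⟩⟩
  obtain ⟨t0, ht0⟩ := count_beta c K
  choose t1 ht1 using fun i : Fin l => count_beta (p i) (R i)
  set t : ℤ := min 0 (min (min t0 c)
    (Finset.univ.inf' Finset.univ_nonempty fun i => min (t1 i) (p i))) with htdef
  have htinf : ∀ i : Fin l, t ≤ min (t1 i) (p i) := by
    intro i
    calc t ≤ _ := min_le_right _ _
    _ ≤ _ := min_le_right _ _
    _ ≤ _ := Finset.inf'_le _ (Finset.mem_univ i)
  have ht_nonpos : t ≤ 0 := min_le_left _ _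
  have ht_t0 : t ≤ t0 :=
    le_trans (le_trans (min_le_right _ _) (min_le_left _ _)) (min_le_left _ _)
  have ht_c : t ≤ c :=
    le_trans (le_trans (min_le_right _ _) (min_le_left _ _)) (min_le_right _ _)
  have hl1 : (1 : ℤ) ≤ (l : ℤ) := by exact_mod_cast hl
  have hlt : (l : ℤ) * t ≤ t := by
    have := mul_le_mul_of_nonpos_right hl1 ht_nonpos
    linarith
  have hfin : ∀ i : Fin l, (qset l S i ∩ Set.Ici t).Finite := by
    intro i
    rw [← hq i]
    exact beta_inter_finite _ _ _
  have hcount := count_quot hl S t hfin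
  have e1 : (S ∩ Set.Ici ((l : ℤ) * t)).ncard = (c - (l : ℤ) * t).toNat := by
    rw [← hS]
    exact ht0 _ (le_trans hlt ht_t0)
  have e2 : ∀ i : Fin l, (qset l S i ∩ Set.Ici t).ncard = (p i - t).toNat := by
    intro i
    rw [← hq i]
    exact ht1 i _ (le_trans (htinf i) (min_le_left _ _))
  rw [e1, Finset.sum_congr rfl fun i _ => e2 i] at hcount
  have hz : c - (l : ℤ) * t = ∑ i : Fin l, (p i - t) := by
    have h1 : ((c - (l : ℤ) * t).toNat : ℤ) = c - (l : ℤ) * t :=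
      Int.toNat_of_nonneg (by linarith)
    have h2 : ∀ i : Fin l, (((p i - t).toNat : ℕ) : ℤ) = p i - t := fun i =>
      Int.toNat_of_nonneg (by have := le_trans (htinf i) (min_le_right _ _); linarith)
    calc c - (l : ℤ) * t = ((c - (l : ℤ) * t).toNat : ℤ) := h1.symm
      _ = ((∑ i : Fin l, (p i - t).toNat : ℕ) : ℤ) := by rw [hcount]
      _ = ∑ i : Fin l, (((p i - t).toNat : ℕ) : ℤ) := by push_cast; ring
      _ = ∑ i : Fin l, (p i - t) := Finset.sum_congr rfl fun i _ => h2 i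
  rw [Finset.sum_sub_distrib, Finset.sum_const, Finset.card_univ, Fintype.card_fin] at hz
  have hsm : (l : ℕ) • t = (l : ℤ) * t := by simp [nsmul_eq_mul]
  rw [hsm] at hz
  linarith

/-- The blended set determined by charges `p` and partitions `R`. -/
def blendSet (l : ℕ) (p : Fin l → ℤ) (R : Fin l → Partition') : Set ℤ :=
  {k | ∃ i : Fin l, ∃ q : ℤ, q ∈ beta (p i) (R i) ∧ k = (l : ℤ) * q + ((i : ℕ) : ℤ)}

lemma blend_eq (l : ℕ) (p : Fin l → ℤ) (R : Fin l → Partition') :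
    blendSet l p R = {k : ℤ | ∃ i : Fin l, ∃ m : ℕ,
      k = (l : ℤ) * (((R i).parts m : ℤ) - ((m : ℤ) + 1) + p i) + ((i : ℕ) : ℤ)} := by
  ext k
  simp only [blendSet, beta, Set.mem_setOf_eq]
  constructor
  · rintro ⟨i, q, ⟨m, rfl⟩, rfl⟩
    exact ⟨i, m, by ring⟩
  · rintro ⟨i, m, rfl⟩
    exact ⟨i, p i + ((R i).parts m : ℤ) - ((m : ℤ) + 1), ⟨m, rfl⟩, by ring⟩

lemma isBlended_iff (l : ℕ) (p : Fin l → ℤ) (R : Fin l → Partition') (K : Partition') :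
    IsBlended l p R K ↔ beta (∑ i, p i) K = blendSet l p R := by
  rw [blend_eq]
  exact Iff.rfl

lemma qset_blend {l : ℕ} (hl : 0 < l) (p : Fin l → ℤ) (R : Fin l → Partition') (i : Fin l) :
    qset l (blendSet l p R) i = beta (p i) (R i) := by
  ext q
  simp only [qset, blendSet, Set.mem_setOf_eq]
  constructor
  · rintro ⟨i', q', hq', he⟩
    obtain ⟨hq, hi⟩ := res_uniq hl he
    subst hq; subst hi
    exact hq'
  · intro hq
    exact ⟨i, q, hq, rfl⟩

lemma good_of_qsets {l : ℕ} (hl : 0 < l) {S : Set ℤ}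
    (h : ∀ i : Fin l, Good (qset l S i)) : Good S := by
  classical
  have hne : Nonempty (Fin l) := ⟨⟨0, hl⟩⟩
  have hl0 : (0 : ℤ) ≤ (l : ℤ) := Int.natCast_nonneg _
  have hlpos : (0 : ℤ) < l := by exact_mod_cast hl
  choose a ha using fun i => (h i).1
  choose b hb using fun i => (h i).2
  set A : ℤ := Finset.univ.sup' Finset.univ_nonempty a with hA
  set B : ℤ := Finset.univ.inf' Finset.univ_nonempty b with hB
  constructor
  · refine ⟨(l : ℤ) * A + l, ?_⟩
    intro k hk
    obtain ⟨i, q, hq, rfl⟩ := (mem_decomp hl S k).mp hk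
    have h1 : q ≤ A := le_trans (ha i q hq) (Finset.le_sup' a (Finset.mem_univ i))
    have h2 : (l : ℤ) * q ≤ (l : ℤ) * A := mul_le_mul_of_nonneg_left h1 hl0
    have hi : ((i : ℕ) : ℤ) < l := by exact_mod_cast i.isLt
    omega
  · refine ⟨(l : ℤ) * B - l, ?_⟩
    intro k hk
    rw [mem_decomp hl S k]
    have hl0' : (l : ℤ) ≠ 0 := by exact_mod_cast hl.ne'
    have hmod0 : 0 ≤ k % (l : ℤ) := Int.emod_nonneg k hl0'
    have hmodl : k % (l : ℤ) < l := Int.emod_lt_of_pos k hlpos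
    have hcast : (((k % (l : ℤ)).toNat : ℕ) : ℤ) = k % l := Int.toNat_of_nonneg hmod0
    set i : Fin l := ⟨(k % (l : ℤ)).toNat, by omega⟩ with hi
    refine ⟨i, k / (l : ℤ), ?_, ?_⟩
    · apply hb i
      have h1 : (l : ℤ) * (k / l) + ((i : ℕ) : ℤ) = k := by
        show (l : ℤ) * (k / l) + (((k % (l : ℤ)).toNat : ℕ) : ℤ) = k
        rw [hcast, Int.mul_ediv_add_emod k l]
      have h2 : (l : ℤ) * (k / l) ≤ (l : ℤ) * (B - 1) := by
        have : ((i : ℕ) : ℤ) = k % l := hcast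
        have := mul_sub (l : ℤ) B 1
        omega
      have h3 : k / (l : ℤ) ≤ B - 1 := le_of_mul_le_mul_left h2 hlpos
      have h4 : B ≤ b i := Finset.inf'_le b (Finset.mem_univ i)
      omega
    · show k = (l : ℤ) * (k / l) + (((k % (l : ℤ)).toNat : ℕ) : ℤ)
      rw [hcast, Int.mul_ediv_add_emod k l]

lemma good_qset {l : ℕ} (hl : 0 < l) {S : Set ℤ} (hS : Good S) (i : Fin l) :
    Good (qset l S i) := by
  obtain ⟨⟨a, ha⟩, ⟨b, hb⟩⟩ := hS
  have hl0 : (0 : ℤ) ≤ (l : ℤ) := Int.natCast_nonneg _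
  have hl1 : (1 : ℤ) ≤ (l : ℤ) := by exact_mod_cast hl
  have hi : ((i : ℕ) : ℤ) < l := by exact_mod_cast i.isLt
  have hi0 : (0 : ℤ) ≤ ((i : ℕ) : ℤ) := Int.natCast_nonneg _
  constructor
  · refine ⟨max a 0, ?_⟩
    intro q hq
    by_contra hcon
    push_neg at hcon
    have hq0 : 0 ≤ q := by omega
    have h1 : q ≤ (l : ℤ) * q := le_mul_of_one_le_left hq0 hl1
    have h2 := ha _ hq
    omega
  · refine ⟨min b 0 - l, ?_⟩
    intro q hq
    apply hb
    have hq0 : q ≤ 0 := by omega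
    have h1 : (l : ℤ) * q ≤ 1 * q := mul_le_mul_of_nonpos_right hl1 hq0
    omega

end BlendAux

/-- For every `l ≥ 2` and every fixed total charge `p`, blending is a
bijection from pairs `((p_0, …, p_{l−1}), (R_0, …, R_{l−1}))` with `∑ p_i = p` onto the
set of all partitions: each such pair blends to a unique partition `K`, and every
partition `K` is the blended partition of a unique such pair. -/
theorem blending_bijective (l : ℕ) (hl : 2 ≤ l) (P : ℤ) :
    (∀ (p : Fin l → ℤ) (R : Fin l → Partition'), ∑ i, p i = P →
      ∃! K : Partition', IsBlended l p R K) ∧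
    (∀ K : Partition', ∃! pR : (Fin l → ℤ) × (Fin l → Partition'),
      (∑ i, pR.1 i) = P ∧ IsBlended l pR.1 pR.2 K) := by
  classical
  have h0 : 0 < l := by omega
  constructor
  · intro p R hp
    have hgood : BlendAux.Good (BlendAux.blendSet l p R) :=
      BlendAux.good_of_qsets h0 fun i => by
        rw [BlendAux.qset_blend h0]
        exact BlendAux.good_beta _ _
    obtain ⟨c, K, hcK⟩ := BlendAux.exists_beta hgood
    have hc : c = ∑ i, p i :=
      BlendAux.charge_add h0 hcK fun i => (BlendAux.qset_blend h0 p R i).symm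
    refine ⟨K, ?_, ?_⟩
    · show IsBlended l p R K
      rw [BlendAux.isBlended_iff, ← hc]
      exact hcK
    · intro K' hK'
      rw [BlendAux.isBlended_iff] at hK'
      have heq : BlendAux.beta (∑ i, p i) K' = BlendAux.beta (∑ i, p i) K := by
        rw [hK', ← hc, hcK]
      exact (BlendAux.beta_inj heq).2
  · intro K
    set S : Set ℤ := BlendAux.beta P K with hSdef
    have hgood : BlendAux.Good S := BlendAux.good_beta P K
    have hqg : ∀ i : Fin l, BlendAux.Good (BlendAux.qset l S i) := fun i =>
      BlendAux.good_qset h0 hgood i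
    choose pp RR hPR using fun i => BlendAux.exists_beta (hqg i)
    have hsum : P = ∑ i, pp i := BlendAux.charge_add h0 rfl hPR
    have hblend : BlendAux.blendSet l pp RR = S := by
      ext k
      rw [BlendAux.mem_decomp h0 S k]
      simp only [BlendAux.blendSet, Set.mem_setOf_eq]
      constructor
      · rintro ⟨i, q, h1, h2⟩
        rw [hPR i] at h1
        exact ⟨i, q, h1, h2⟩
      · rintro ⟨i, q, h1, h2⟩
        rw [← hPR i] at h1
        exact ⟨i, q, h1, h2⟩
    refine ⟨(pp, RR), ⟨hsum.symm, ?_⟩, ?_⟩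
    · show IsBlended l pp RR K
      rw [BlendAux.isBlended_iff, ← hsum, hblend]
    · rintro ⟨p', R'⟩ ⟨hp', hB⟩
      rw [BlendAux.isBlended_iff, hp'] at hB
      have hq' : ∀ i, BlendAux.beta (p' i) (R' i) = BlendAux.qset l S i := by
        intro i
        rw [← BlendAux.qset_blend h0 p' R' i, ← hB]
      have heq : ∀ i, p' i = pp i ∧ R' i = RR i := fun i =>
        BlendAux.beta_inj ((hq' i).trans (hPR i).symm)
      refine Prod.ext ?_ ?_
      · funext i; exact (heq i).1
      · funext i; exact (heq i).2
end
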